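/- arXiv:math/9905183 — 4 statements merged into one kernel-verified Lean document; each statement's English description precedes it below -/
import Mathlib

section
/- Let Φ : E × E → F be Hermitian sesquilinear and non-degenerate in the sense that for every nonzero e ∈ E there is c ∈ E with Φ(e,c) ≠ 0. If η ∈ GL(E), ε ∈ GL(F) commutes with *, and α : F → E is linear such that the map g(z,w) = (ηz + αw, εw) maps M = {(z,w) : w+w* = Φ(z,z)} into itself, then Φ(ηz,ηz) = εΦ(z,z) for all z ∈ E and α vanishes on V = {v ∈ F : v+v* = 0}. -/
/-- Let `Φ : E × E → F` be Hermitian sesquilinear and non-degenerate (for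
every nonzero `e ∈ E` there is `c ∈ E` with `Φ(e,c) ≠ 0`).  If `η ∈ GL(E)`, `ε ∈ GL(F)`
commutes with `*`, and `α : F → E` is linear such that `g(z,w) = (ηz + αw, εw)` maps
`M = {(z,w) : w+w* = Φ(z,z)}` into itself, then `Φ(ηz,ηz) = εΦ(z,z)` for all `z ∈ E`
and `α` vanishes on `V = {v : v+v* = 0}`. -/
theorem stmt_5
    {E F : Type*} [NormedAddCommGroup E] [InnerProductSpace ℂ E] [FiniteDimensional ℂ E]
    [NormedAddCommGroup F] [InnerProductSpace ℂ F] [FiniteDimensional ℂ F]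
    (conj : F → F)
    (hadd : ∀ x y, conj (x + y) = conj x + conj y)
    (hsmul : ∀ (c : ℂ) x, conj (c • x) = (starRingEnd ℂ) c • conj x)
    (hinv : ∀ x, conj (conj x) = x)
    (hiso : ∀ x, ‖conj x‖ = ‖x‖)
    (Φ : E → E → F)
    (hΦadd₁ : ∀ u u' v, Φ (u + u') v = Φ u v + Φ u' v)
    (hΦadd₂ : ∀ u v v', Φ u (v + v') = Φ u v + Φ u v')
    (hΦsmul₁ : ∀ (c : ℂ) u v, Φ (c • u) v = (starRingEnd ℂ) c • Φ u v)
    (hΦsmul₂ : ∀ (c : ℂ) u v, Φ u (c • v) = c • Φ u v)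
    (hherm : ∀ u v, Φ v u = conj (Φ u v))
    (M : Set (E × F)) (hM : M = {p | p.2 + conj p.2 = Φ p.1 p.1}) :
    ∀ (hnd : ∀ e : E, e ≠ 0 → ∃ c : E, Φ e c ≠ 0)
      (η : E ≃ₗ[ℂ] E) (ε : F ≃ₗ[ℂ] F) (hε : ∀ w, ε (conj w) = conj (ε w))
      (α : F →ₗ[ℂ] E),
      (∀ p ∈ M, ((η p.1 + α p.2 : E), (ε p.2 : F)) ∈ M) →
      (∀ z : E, Φ (η z) (η z) = ε (Φ z z)) ∧
      (∀ v : F, v + conj v = 0 → α v = 0) := by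
  intro hnd η ε hε α hg
  subst hM
  have conj0 : conj 0 = 0 := by
    have h := hadd 0 0
    rw [add_zero] at h
    exact (left_eq_add.mp h)
  have Φz1 : ∀ v, Φ 0 v = 0 := fun v => by
    have h := hΦsmul₁ 0 0 v; simpa using h
  have key : ∀ z w, w + conj w = Φ z z →
      Φ (η z + α w) (η z + α w) = ε (Φ z z) := by
    intro z w hw
    have h2 := hg (z, w) hw
    simp only [Set.mem_setOf_eq] at h2
    rw [← hε, ← map_add, hw] at h2
    exact h2.symm
  have hermzz : ∀ z, conj (Φ z z) = Φ z z := fun z => (hherm z z).symm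
  have half : ∀ z : E, ((1/2:ℂ) • Φ z z) + conj ((1/2:ℂ) • Φ z z) = Φ z z := by
    intro z
    rw [hsmul, hermzz, ← add_smul]
    norm_num [map_div₀, map_ofNat]
  have expand2 : ∀ (x y : E), Φ (x + y) (x + y) = Φ x x + Φ x y + Φ y x + Φ y y := by
    intro x y
    rw [hΦadd₁, hΦadd₂, hΦadd₂]
    abel
  constructor
  · intro z
    have eqs : ∀ s : ℂ, (starRingEnd ℂ) s = s →
        (s*s) • Φ (η z) (η z) + (s*s*s/2) • Φ (η z) (α (Φ z z))
        + (s*s*s/2) • Φ (α (Φ z z)) (η z)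
        + (s*s*s*s/4) • Φ (α (Φ z z)) (α (Φ z z))
          = (s*s) • ε (Φ z z) := by
      intro s hs
      have hmem : ((s*s) • ((1/2:ℂ) • Φ z z)) + conj ((s*s) • ((1/2:ℂ) • Φ z z))
          = Φ (s • z) (s • z) := by
        rw [hsmul, map_mul, hs, ← smul_add, half, hΦsmul₁, hΦsmul₂, hs, smul_smul]
      have hk := key (s • z) ((s*s) • ((1/2:ℂ) • Φ z z)) hmem
      simp only [map_smul, expand2, hΦsmul₁, hΦsmul₂, hs, smul_smul, map_mul, map_div₀, map_one, map_ofNat] at hk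
      linear_combination (norm := module) hk
    have e1 := eqs 1 (by simp)
    have e2 := eqs 2 (by simp [map_ofNat])
    have e3 := eqs 3 (by simp [map_ofNat])
    linear_combination (norm := module) (3:ℂ) • e1 - (3/4:ℂ) • e2 + (1/9:ℂ) • e3
  · intro v hv
    have hm0 : Φ (α v) (α v) = 0 := by
      have hk := key 0 v (by rw [Φz1]; exact hv)
      simpa [Φz1] using hk
    have rel0 : ∀ z : E,
        Φ (η z + α ((1/2:ℂ) • Φ z z)) (α v) + Φ (α v) (η z + α ((1/2:ℂ) • Φ z z)) = 0 := by
      intro z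
      have k1 := key z ((1/2:ℂ) • Φ z z) (half z)
      have k2 := key z ((1/2:ℂ) • Φ z z + v) (by
        rw [hadd, add_add_add_comm, half, hv, add_zero])
      rw [map_add, ← add_assoc, expand2, hm0, add_zero] at k2
      linear_combination (norm := module) k2 - k1
    have relE : ∀ z : E, Φ (η z) (α v) = 0 := by
      intro z
      have r1 := rel0 z
      have r2 := rel0 ((2:ℂ) • z)
      have r3 := rel0 (Complex.I • z)
      simp only [map_smul, hΦsmul₁, hΦsmul₂, hΦadd₁, hΦadd₂, smul_smul, map_mul,
        map_div₀, map_one, map_ofNat, Complex.conj_I, map_neg, neg_mul, mul_neg,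
        neg_neg, Complex.I_mul_I, smul_add] at r1 r2 r3
      have s2 : Φ (α (Φ z z)) (α v) + Φ (α v) (α (Φ z z)) = 0 := by
        linear_combination (norm := module) r2 - (2:ℂ) • r1
      have s1 : Φ (η z) (α v) + Φ (α v) (η z) = 0 := by
        linear_combination (norm := module) r1 - (1/2:ℂ) • s2
      have h4 : (-Complex.I) • Φ (η z) (α v) + Complex.I • Φ (α v) (η z) = 0 := by
        linear_combination (norm := module) r3 - (1/2:ℂ) • s2
      have h5 := congrArg (fun x => Complex.I • x) h4
      simp only [smul_add, smul_neg, smul_smul, smul_zero, mul_neg, Complex.I_mul_I, neg_neg,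
        one_smul, neg_smul, neg_one_smul] at h5
      linear_combination (norm := module) (1/2:ℂ) • s1 + (1/2:ℂ) • h5
    by_contra hne
    obtain ⟨c, hc⟩ := hnd (α v) hne
    apply hc
    have h6 : Φ c (α v) = 0 := by
      have h7 := relE (η.symm c)
      rwa [η.apply_symm_apply] at h7
    rw [hherm c (α v), h6, conj0]
end

section
/- The set M = {(z,w,v) ∈ ℂ³ : Im w = z·conj(z), Im v = Im(w·conj(z))} is invariant under the map T_{(a,b,c)}(z,w,v) = (z+a, w+2i·conj(a)z+b, v+(2i·conj(a)²−conj(b))z+(a+2conj(a))w+c) for every (a,b,c) ∈ M, and T_{(a,b,c)} maps M bijectively onto M. -/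
open Complex

private theorem stmt6_key (a b c z w v : ℂ)
    (h1 : (b.im : ℂ) = a * (starRingEnd ℂ) a)
    (h2 : c.im = (b * (starRingEnd ℂ) a).im)
    (g1 : (w.im : ℂ) = z * (starRingEnd ℂ) z)
    (g2 : v.im = (w * (starRingEnd ℂ) z).im) :
    ((w + 2 * I * (starRingEnd ℂ) a * z + b).im : ℂ)
      = (z + a) * (starRingEnd ℂ) (z + a) ∧
    (v + (2 * I * ((starRingEnd ℂ) a) ^ 2 - (starRingEnd ℂ) b) * z
      + (a + 2 * (starRingEnd ℂ) a) * w + c).im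
      = ((w + 2 * I * (starRingEnd ℂ) a * z + b) * (starRingEnd ℂ) (z + a)).im := by
  simp only [Complex.ext_iff, Complex.ofReal_re, Complex.ofReal_im, Complex.add_re,
    Complex.add_im, Complex.sub_re, Complex.sub_im, Complex.mul_re, Complex.mul_im,
    Complex.conj_re, Complex.conj_im, Complex.I_re, Complex.I_im,
    Complex.re_ofNat, Complex.im_ofNat, pow_two] at *
  obtain ⟨⟨h1, -⟩, ⟨g1, -⟩⟩ := And.intro h1 g1
  refine ⟨⟨by linear_combination h1 + g1, by ring⟩, ?_⟩
  rw [g2, h2, g1, h1]; ring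

private theorem stmt6_key2 (a b c z w v : ℂ)
    (h1 : (b.im : ℂ) = a * (starRingEnd ℂ) a)
    (h2 : c.im = (b * (starRingEnd ℂ) a).im)
    (G1 : ((w + 2 * I * (starRingEnd ℂ) a * z + b).im : ℂ)
      = (z + a) * (starRingEnd ℂ) (z + a))
    (G2 : (v + (2 * I * ((starRingEnd ℂ) a) ^ 2 - (starRingEnd ℂ) b) * z
      + (a + 2 * (starRingEnd ℂ) a) * w + c).im
      = ((w + 2 * I * (starRingEnd ℂ) a * z + b) * (starRingEnd ℂ) (z + a)).im) :
    ((w.im : ℂ) = z * (starRingEnd ℂ) z) ∧ v.im = (w * (starRingEnd ℂ) z).im := by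
  simp only [Complex.ext_iff, Complex.ofReal_re, Complex.ofReal_im, Complex.add_re,
    Complex.add_im, Complex.sub_re, Complex.sub_im, Complex.mul_re, Complex.mul_im,
    Complex.conj_re, Complex.conj_im, Complex.I_re, Complex.I_im,
    Complex.re_ofNat, Complex.im_ofNat, pow_two] at *
  obtain ⟨⟨h1, -⟩, ⟨G1, -⟩⟩ := And.intro h1 G1
  have g1 : w.im = z.re * z.re - z.im * -z.im := by linear_combination G1 - h1
  refine ⟨⟨g1, by ring⟩, ?_⟩
  linear_combination G2 - h2 - 2 * a.re * g1

/-- The set `M = {(z,w,v) ∈ ℂ³ : Im w = z·conj z, Im v = Im (w·conj z)}` is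
invariant under the map
`T_{(a,b,c)}(z,w,v) = (z+a, w+2i·conj(a)z+b, v+(2i·conj(a)²−conj(b))z+(a+2conj(a))w+c)`
for every `(a,b,c) ∈ M`, and `T_{(a,b,c)}` maps `M` bijectively onto `M`. -/
theorem stmt_6
    (M : Set (ℂ × ℂ × ℂ))
    (hM : M = {p | (p.2.1.im : ℂ) = p.1 * (starRingEnd ℂ) p.1 ∧
                    p.2.2.im = (p.2.1 * (starRingEnd ℂ) p.1).im}) :
    ∀ a b c, (a, b, c) ∈ M →
      Set.BijOn (fun p : ℂ × ℂ × ℂ =>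
          (p.1 + a,
           p.2.1 + 2 * I * (starRingEnd ℂ) a * p.1 + b,
           p.2.2 + (2 * I * ((starRingEnd ℂ) a) ^ 2 - (starRingEnd ℂ) b) * p.1
             + (a + 2 * (starRingEnd ℂ) a) * p.2.1 + c)) M M := by
  subst hM
  intro a b c habc
  simp only [Set.mem_setOf_eq] at habc
  obtain ⟨h1, h2⟩ := habc
  refine ⟨?_, ?_, ?_⟩
  · intro p hp
    simp only [Set.mem_setOf_eq] at hp ⊢
    exact stmt6_key a b c p.1 p.2.1 p.2.2 h1 h2 hp.1 hp.2
  · intro p _ q _ h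
    dsimp only at h
    rw [Prod.mk.injEq, Prod.mk.injEq] at h
    obtain ⟨e1, e2, e3⟩ := h
    have f1 : p.1 = q.1 := by linear_combination e1
    have f2 : p.2.1 = q.2.1 := by
      linear_combination e2 - 2 * I * (starRingEnd ℂ) a * f1
    have f3 : p.2.2 = q.2.2 := by
      linear_combination e3 - (2 * I * ((starRingEnd ℂ) a) ^ 2 - (starRingEnd ℂ) b) * f1
        - (a + 2 * (starRingEnd ℂ) a) * f2
    exact Prod.ext_iff.mpr ⟨f1, Prod.ext_iff.mpr ⟨f2, f3⟩⟩
  · rintro ⟨z, w, v⟩ hq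
    simp only [Set.mem_setOf_eq] at hq
    refine ⟨(z - a,
        w - 2 * I * (starRingEnd ℂ) a * (z - a) - b,
        v - (2 * I * ((starRingEnd ℂ) a) ^ 2 - (starRingEnd ℂ) b) * (z - a)
          - (a + 2 * (starRingEnd ℂ) a) * (w - 2 * I * (starRingEnd ℂ) a * (z - a) - b)
          - c), ?_, ?_⟩
    · simp only [Set.mem_setOf_eq]
      refine stmt6_key2 a b c (z - a) (w - 2 * I * (starRingEnd ℂ) a * (z - a) - b)
        (v - (2 * I * ((starRingEnd ℂ) a) ^ 2 - (starRingEnd ℂ) b) * (z - a)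
          - (a + 2 * (starRingEnd ℂ) a) * (w - 2 * I * (starRingEnd ℂ) a * (z - a) - b)
          - c) h1 h2 ?_ ?_
      · rw [show w - 2 * I * (starRingEnd ℂ) a * (z - a) - b
            + 2 * I * (starRingEnd ℂ) a * (z - a) + b = w by ring,
          show z - a + a = z by ring]
        exact hq.1
      · rw [show v - (2 * I * ((starRingEnd ℂ) a) ^ 2 - (starRingEnd ℂ) b) * (z - a)
            - (a + 2 * (starRingEnd ℂ) a) * (w - 2 * I * (starRingEnd ℂ) a * (z - a) - b)
            - c + (2 * I * ((starRingEnd ℂ) a) ^ 2 - (starRingEnd ℂ) b) * (z - a)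
            + (a + 2 * (starRingEnd ℂ) a) * (w - 2 * I * (starRingEnd ℂ) a * (z - a) - b)
            + c = v by ring,
          show w - 2 * I * (starRingEnd ℂ) a * (z - a) - b
            + 2 * I * (starRingEnd ℂ) a * (z - a) + b = w by ring,
          show z - a + a = z by ring]
        exact hq.2
    · dsimp only
      exact Prod.ext_iff.mpr ⟨by ring, Prod.ext_iff.mpr ⟨by ring, by ring⟩⟩
end

section
/- For p = q, the set S = {z ∈ ℂ^{q×q} : z*z = 1} equals {z ∈ closure(D) : |det z| = 1}, where D = {z : 1 − z*z positive definite}; consequently for every a in closure(D) \ S the function z ↦ 1/(det z − det a) is holomorphic in a neighbourhood of S, so the rational convex hull of S = U(q) in ℂ^{q×q} is S itself. -/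
open Matrix
open scoped ComplexOrder

/-- Evaluation of a polynomial in the matrix entries. -/
noncomputable def matPolyEval {q : ℕ} (P : MvPolynomial (Fin q × Fin q) ℂ)
    (z : Matrix (Fin q) (Fin q) ℂ) : ℂ :=
  MvPolynomial.eval (fun ij => z ij.1 ij.2) P

/-- The rational convex hull of a compact `K ⊂ ℂ^{q×q}`: the set of `z` such that every
rational function holomorphic on `K` (quotient `P/Q` of polynomials with `Q` nonvanishing
on `K`) is holomorphic at `z` (i.e. `Q z ≠ 0`) and satisfies `|f(z)| ≤ sup_K |f|`. -/
def ratHull {q : ℕ} (K : Set (Matrix (Fin q) (Fin q) ℂ)) : Set (Matrix (Fin q) (Fin q) ℂ) :=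
  {z | ∀ P Q : MvPolynomial (Fin q × Fin q) ℂ,
    (∀ w ∈ K, matPolyEval Q w ≠ 0) →
      matPolyEval Q z ≠ 0 ∧
      ∀ c : ℝ, (∀ w ∈ K, ‖matPolyEval P w / matPolyEval Q w‖ ≤ c) →
        ‖matPolyEval P z / matPolyEval Q z‖ ≤ c}

/-!
The closure of `D` is `{z | 1 - zᴴ z ⪰ 0}`, where the eigenvalues of `zᴴ z` lie in `[0, 1]`; as
`det (zᴴ z) = |det z|²`, the condition `|det z| = 1` forces all of them to be `1`, i.e. `zᴴ z = 1`.

For the hull, a point `z` outside the closure of `D` moves some `x` to a longer vector `y = z x`: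
the linear polynomial `w ↦ ⟪y, w x⟫` is bounded by `‖y‖ ‖x‖` on `U(q)` but equals `‖y‖²` at `z`.
A point `z` of the closure of `D` outside `U(q)` has `|det z| < 1`, so `det w - det z` has no zero
on `U(q)` but vanishes at `z`.
-/

open Filter Topology WithLp

namespace Matrix

variable {n 𝕜 : Type*} [Fintype n] [RCLike 𝕜]

theorem isClosed_setOf_posSemidef : IsClosed {A : Matrix n n 𝕜 | A.PosSemidef} := by
  have : {A : Matrix n n 𝕜 | A.PosSemidef} =
      {A | Aᴴ = A} ∩ ⋂ x : n → 𝕜, {A | 0 ≤ star x ⬝ᵥ A *ᵥ x} := by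
    ext A
    simp [posSemidef_iff_dotProduct_mulVec, IsHermitian]
  rw [this]
  exact (isClosed_eq (by fun_prop) continuous_id).inter
    (isClosed_iInter fun x => isClosed_le continuous_const (by fun_prop))

theorem star_dotProduct_eq_inner (u v : n → 𝕜) :
    star u ⬝ᵥ v = inner 𝕜 (toLp 2 u) (toLp 2 v) := by
  rw [EuclideanSpace.inner_toLp_toLp, dotProduct_comm]

theorem star_dotProduct_self (u : n → 𝕜) : star u ⬝ᵥ u = (‖toLp 2 u‖ : 𝕜) ^ 2 := by
  rw [star_dotProduct_eq_inner, inner_self_eq_norm_sq_to_K]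

variable [DecidableEq n]

theorem posDef_one_sub_smul_conjTranspose_mul_self {z : Matrix n n 𝕜}
    (hz : (1 - zᴴ * z).PosSemidef) {r : ℝ} (h0 : 0 ≤ r) (h1 : r < 1) :
    (1 - (r • z)ᴴ * (r • z)).PosDef := by
  have : 1 - (r • z)ᴴ * (r • z) = (1 - r ^ 2) • (1 : Matrix n n 𝕜) + r ^ 2 • (1 - zᴴ * z) := by
    rw [conjTranspose_smul, star_trivial, smul_mul_smul, smul_sub, sub_smul, one_smul, sq]
    abel
  rw [this]
  exact (PosDef.one.smul (by nlinarith)).add_posSemidef (hz.smul (sq_nonneg r))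

theorem closure_setOf_posDef_one_sub_conjTranspose_mul_self :
    closure {z : Matrix n n 𝕜 | (1 - zᴴ * z).PosDef} = {z | (1 - zᴴ * z).PosSemidef} := by
  refine (closure_minimal (fun z hz => hz.posSemidef) ?_).antisymm fun z hz => ?_
  · exact isClosed_setOf_posSemidef.preimage (by fun_prop)
  · have hlim : Tendsto (fun r : ℝ => r • z) (𝓝[<] 1) (𝓝 z) := by
      have hcont : Continuous fun r : ℝ => r • z := continuous_id.smul continuous_const
      simpa using (hcont.tendsto 1).mono_left nhdsWithin_le_nhds
    refine mem_closure_of_tendsto hlim ?_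
    filter_upwards [Ioo_mem_nhdsLT zero_lt_one] with r hr
    exact posDef_one_sub_smul_conjTranspose_mul_self hz hr.1.le hr.2

open scoped MatrixOrder in
theorem IsHermitian.eigenvalues_le_one {A : Matrix n n 𝕜} (hA : A.IsHermitian)
    (h : (1 - A).PosSemidef) (i : n) : hA.eigenvalues i ≤ 1 := by
  have hle : A ≤ algebraMap ℝ (Matrix n n 𝕜) 1 := by rwa [map_one, le_iff]
  exact (le_algebraMap_iff_spectrum_le hA.isSelfAdjoint).1 hle _
    (hA.eigenvalues_mem_spectrum_real i)

theorem PosSemidef.det_le_one {A : Matrix n n 𝕜} (hA : A.PosSemidef) (h : (1 - A).PosSemidef) :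
    A.det ≤ 1 := by
  rw [hA.1.det_eq_prod_eigenvalues, ← RCLike.ofReal_prod, ← RCLike.ofReal_one,
    RCLike.ofReal_le_ofReal]
  exact Finset.prod_le_one (fun i _ => hA.eigenvalues_nonneg i)
    fun i _ => hA.1.eigenvalues_le_one h i

theorem PosSemidef.eq_one_of_det_eq_one {A : Matrix n n 𝕜} (hA : A.PosSemidef)
    (h : (1 - A).PosSemidef) (hdet : A.det = 1) : A = 1 := by
  rw [hA.1.det_eq_prod_eigenvalues, ← RCLike.ofReal_prod, ← RCLike.ofReal_one,
    RCLike.ofReal_inj] at hdet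
  have hone : ∀ i, (hA.1.eigenvalues i).toNNReal = 1 := by
    have := Finset.prod_eq_one_iff_of_le_one' (s := Finset.univ)
      (f := fun i => (hA.1.eigenvalues i).toNNReal)
      fun i _ => Real.toNNReal_le_one.2 (hA.1.eigenvalues_le_one h i)
    simpa [← Real.toNNReal_prod_of_nonneg fun i _ => hA.eigenvalues_nonneg i, hdet] using this
  refine CFC.eq_one_of_spectrum_subset_one (R := ℝ) A ?_ hA.1.isSelfAdjoint
  rw [hA.1.spectrum_real_eq_range_eigenvalues]
  rintro _ ⟨i, rfl⟩
  simpa [Real.toNNReal_eq_one] using hone i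

theorem det_conjTranspose_mul_self (z : Matrix n n 𝕜) : (zᴴ * z).det = (‖z.det‖ : 𝕜) ^ 2 := by
  rw [det_mul, det_conjTranspose, RCLike.star_def, RCLike.conj_mul]

theorem norm_det_le_one_of_posSemidef {z : Matrix n n 𝕜} (h : (1 - zᴴ * z).PosSemidef) :
    ‖z.det‖ ≤ 1 := by
  have := (posSemidef_conjTranspose_mul_self z).det_le_one h
  rw [det_conjTranspose_mul_self, ← RCLike.ofReal_pow, ← RCLike.ofReal_one,
    RCLike.ofReal_le_ofReal] at this
  exact (sq_le_one_iff₀ (norm_nonneg _)).1 this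

theorem setOf_conjTranspose_mul_self_eq_one :
    {z : Matrix n n 𝕜 | zᴴ * z = 1} = {z | (1 - zᴴ * z).PosSemidef ∧ ‖z.det‖ = 1} := by
  ext z
  refine ⟨fun hz => ⟨?_, ?_⟩, fun ⟨hz, hdet⟩ => ?_⟩
  · rw [hz, sub_self]
    exact PosSemidef.zero
  · exact CStarRing.norm_of_mem_unitary (det_of_mem_unitary (mem_unitaryGroup_iff'.2 hz))
  · refine (posSemidef_conjTranspose_mul_self z).eq_one_of_det_eq_one hz ?_
    rw [det_conjTranspose_mul_self, hdet, RCLike.ofReal_one, one_pow]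

theorem posSemidef_one_sub_conjTranspose_mul_self_iff {z : Matrix n n 𝕜} :
    (1 - zᴴ * z).PosSemidef ↔ ∀ x : n → 𝕜, ‖toLp 2 (z *ᵥ x)‖ ≤ ‖toLp 2 x‖ := by
  have hquad (x : n → 𝕜) : star x ⬝ᵥ (1 - zᴴ * z) *ᵥ x
      = (‖toLp 2 x‖ : 𝕜) ^ 2 - (‖toLp 2 (z *ᵥ x)‖ : 𝕜) ^ 2 := by
    rw [sub_mulVec, one_mulVec, dotProduct_sub, ← mulVec_mulVec, dotProduct_mulVec,
      ← star_mulVec, star_dotProduct_self, star_dotProduct_self]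
  rw [posSemidef_iff_dotProduct_mulVec]
  simp only [isHermitian_one.sub (isHermitian_conjTranspose_mul_self z), true_and, hquad,
    sub_nonneg]
  refine forall_congr' fun x => ?_
  norm_cast
  exact sq_le_sq₀ (norm_nonneg _) (norm_nonneg _)

theorem norm_toLp_mulVec_of_conjTranspose_mul_self_eq_one {w : Matrix n n 𝕜} (hw : wᴴ * w = 1)
    (x : n → 𝕜) : ‖toLp 2 (w *ᵥ x)‖ = ‖toLp 2 x‖ := by
  have h : star (w *ᵥ x) ⬝ᵥ (w *ᵥ x) = star x ⬝ᵥ x := by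
    rw [star_mulVec, ← dotProduct_mulVec, mulVec_mulVec, hw, one_mulVec]
  rw [star_dotProduct_self, star_dotProduct_self] at h
  exact (pow_left_inj₀ (norm_nonneg _) (norm_nonneg _) two_ne_zero).1 (by exact_mod_cast h)

end Matrix

section RationalHull

variable {q : ℕ}

@[simp]
theorem matPolyEval_C (c : ℂ) (z : Matrix (Fin q) (Fin q) ℂ) :
    matPolyEval (MvPolynomial.C c) z = c :=
  MvPolynomial.eval_C c

@[simp]
theorem matPolyEval_one (z : Matrix (Fin q) (Fin q) ℂ) : matPolyEval 1 z = 1 :=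
  map_one _

@[simp]
theorem matPolyEval_sub (P Q : MvPolynomial (Fin q × Fin q) ℂ) (z : Matrix (Fin q) (Fin q) ℂ) :
    matPolyEval (P - Q) z = matPolyEval P z - matPolyEval Q z :=
  map_sub _ P Q

theorem matPolyEval_det (z : Matrix (Fin q) (Fin q) ℂ) :
    matPolyEval (mvPolynomialX (Fin q) (Fin q) ℂ).det z = z.det := by
  rw [matPolyEval, RingHom.map_det, RingHom.mapMatrix_apply]
  exact congrArg det (mvPolynomialX_map_eval₂ (RingHom.id ℂ) z)

theorem matPolyEval_dotProduct_mulVec (v x : Fin q → ℂ) (z : Matrix (Fin q) (Fin q) ℂ) :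
    matPolyEval ((MvPolynomial.C ∘ v) ⬝ᵥ mvPolynomialX (Fin q) (Fin q) ℂ *ᵥ (MvPolynomial.C ∘ x))
      z = v ⬝ᵥ z *ᵥ x := by
  simp [matPolyEval, dotProduct, mulVec, map_sum]

theorem subset_ratHull (K : Set (Matrix (Fin q) (Fin q) ℂ)) : K ⊆ ratHull K :=
  fun z hz _ _ hQ => ⟨hQ z hz, fun _ hc => hc z hz⟩

variable {K : Set (Matrix (Fin q) (Fin q) ℂ)} {z : Matrix (Fin q) (Fin q) ℂ}

theorem matPolyEval_ne_zero_of_mem_ratHull (hz : z ∈ ratHull K)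
    {Q : MvPolynomial (Fin q × Fin q) ℂ} (hQ : ∀ w ∈ K, matPolyEval Q w ≠ 0) :
    matPolyEval Q z ≠ 0 :=
  (hz 0 Q hQ).1

theorem norm_matPolyEval_le_of_mem_ratHull (hz : z ∈ ratHull K)
    {P : MvPolynomial (Fin q × Fin q) ℂ} {c : ℝ} (hP : ∀ w ∈ K, ‖matPolyEval P w‖ ≤ c) :
    ‖matPolyEval P z‖ ≤ c := by
  simpa using (hz P 1 (by simp)).2 c (by simpa using hP)

theorem one_le_norm_det_of_mem_ratHull (hz : z ∈ ratHull {w | wᴴ * w = 1}) : 1 ≤ ‖z.det‖ := by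
  by_contra! hlt
  refine matPolyEval_ne_zero_of_mem_ratHull hz
    (Q := (mvPolynomialX (Fin q) (Fin q) ℂ).det - MvPolynomial.C z.det) (fun w hw h => ?_)
    (by simp [matPolyEval_det])
  rw [matPolyEval_sub, matPolyEval_det, matPolyEval_C, sub_eq_zero] at h
  rw [setOf_conjTranspose_mul_self_eq_one] at hw
  exact hlt.ne (h ▸ hw.2)

theorem posSemidef_one_sub_conjTranspose_mul_self_of_mem_ratHull
    (hz : z ∈ ratHull {w | wᴴ * w = 1}) : (1 - zᴴ * z).PosSemidef := by
  refine posSemidef_one_sub_conjTranspose_mul_self_iff.2 fun x => ?_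
  set y := z *ᵥ x
  have hbound := norm_matPolyEval_le_of_mem_ratHull hz
    (P := (MvPolynomial.C ∘ star y) ⬝ᵥ mvPolynomialX _ _ ℂ *ᵥ (MvPolynomial.C ∘ x))
    (c := ‖toLp 2 y‖ * ‖toLp 2 x‖) fun w hw => by
      rw [matPolyEval_dotProduct_mulVec, star_dotProduct_eq_inner,
        ← norm_toLp_mulVec_of_conjTranspose_mul_self_eq_one hw x]
      exact norm_inner_le_norm _ _
  rw [matPolyEval_dotProduct_mulVec, star_dotProduct_self] at hbound
  simp only [norm_pow, RCLike.norm_ofReal, abs_norm] at hbound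
  nlinarith [norm_nonneg (toLp 2 y), norm_nonneg (toLp 2 x)]

end RationalHull

theorem stmt_13_general (q : ℕ)
    (D S : Set (Matrix (Fin q) (Fin q) ℂ))
    (hD : D = {z | (1 - zᴴ * z).PosDef})
    (hS : S = {z | zᴴ * z = 1}) :
    S = {z ∈ closure D | ‖z.det‖ = 1} ∧ ratHull S = S := by
  subst hD hS
  rw [closure_setOf_posDef_one_sub_conjTranspose_mul_self]
  refine ⟨setOf_conjTranspose_mul_self_eq_one,
    Set.Subset.antisymm (fun z hz => ?_) (subset_ratHull _)⟩
  have hball := posSemidef_one_sub_conjTranspose_mul_self_of_mem_ratHull hz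
  rw [setOf_conjTranspose_mul_self_eq_one]
  exact ⟨hball,
    (norm_det_le_one_of_posSemidef hball).antisymm (one_le_norm_det_of_mem_ratHull hz)⟩

/-- For `p = q`, the set `S = {z ∈ ℂ^{q×q} : z*z = 1}` equals
`{z ∈ closure(D) : |det z| = 1}` where `D = {z : 1 − z*z positive definite}`, and the
rational convex hull of `S = U(q)` in `ℂ^{q×q}` is `S` itself. -/
theorem stmt_13 (q : ℕ) (hq : 1 ≤ q)
    (D S : Set (Matrix (Fin q) (Fin q) ℂ))
    (hD : D = {z | (1 - zᴴ * z).PosDef})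
    (hS : S = {z | zᴴ * z = 1}) :
    S = {z ∈ closure D | ‖z.det‖ = 1} ∧ ratHull S = S :=
  stmt_13_general q D S hD hS
end

section
/- Let A be a finite-dimensional formally real Jordan algebra (x² + y² = 0 ⟹ x = y = 0) with unit e. Then the set Y = {a² : a ∈ A} of squares is a convex cone satisfying Y ∩ (−Y) = {0} and A = Y − Y. -/
/-!
Each element `a` generates the associative subalgebra `{p(a)}`, and formal reality reduces any
polynomial annihilating `a` to one with simple real roots. Lagrange interpolation at these roots
gives a spectral decomposition `a = ∑ t • f t` into orthogonal idempotents. The trace form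
`Tr a = tr (L a)` is associative, and the Peirce decomposition `L f = P₁ + ½ P_½` of an
idempotent `f` into trace-self-adjoint projections shows `Tr f > 0` for `f ≠ 0` and
`Tr (f * x²) = Tr (P₁ x)² + ½ Tr (P_½ x)² ≥ 0`. Writing `x² + y² = ∑ t • f t`, this gives
`t Tr (f t) = Tr (f t * x²) + Tr (f t * y²) ≥ 0`, so every `t` is nonnegative and
`x² + y² = (∑ √t • f t)²`. The remaining properties follow from formal reality and
`a = ((a + e) / 2)² - ((a - e) / 2)²`.
-/

open Polynomial

namespace JordanAlgebra

section OrthogonalIdempotents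

variable {R A ι : Type*} [CommSemiring R] [NonUnitalNonAssocSemiring A] [Module R A]
  [SMulCommClass R A A]

structure IsOrthogonalIdempotentsOn (s : Finset ι) (f : ι → A) : Prop where
  isIdempotentElem : ∀ i ∈ s, IsIdempotentElem (f i)
  mul_eq_zero : ∀ i ∈ s, ∀ j ∈ s, i ≠ j → f i * f j = 0

theorem IsOrthogonalIdempotentsOn.mul_sum_smul {s : Finset ι} {f : ι → A}
    (hf : IsOrthogonalIdempotentsOn s f) {i : ι} (hi : i ∈ s) (g : ι → R) :
    f i * ∑ j ∈ s, g j • f j = g i • f i := by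
  rw [Finset.mul_sum, Finset.sum_eq_single_of_mem i hi fun j hj hji => by
    rw [mul_smul_comm, hf.mul_eq_zero i hi j hj hji.symm, smul_zero]]
  rw [mul_smul_comm, (hf.isIdempotentElem i hi).eq]

theorem IsOrthogonalIdempotentsOn.sum_smul_mul_sum_smul [IsScalarTower R A A] {s : Finset ι}
    {f : ι → A} (hf : IsOrthogonalIdempotentsOn s f) (g g' : ι → R) :
    (∑ i ∈ s, g i • f i) * ∑ j ∈ s, g' j • f j = ∑ i ∈ s, (g i * g' i) • f i := by
  rw [Finset.sum_mul]
  refine Finset.sum_congr rfl fun i hi => ?_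
  rw [smul_mul_assoc, hf.mul_sum_smul hi, smul_smul]

end OrthogonalIdempotents

theorem isIdempotentElem_aeval_of_dvd {K R : Type*} [CommRing K] [Ring R] [Algebra K R] {x : R}
    {p q : K[X]} (hp : aeval x p = 0) (hdvd : p ∣ q * q - q) : IsIdempotentElem (aeval x q) := by
  obtain ⟨k, hk⟩ := hdvd
  have := congrArg (aeval x) hk
  rwa [map_sub, map_mul, map_mul, hp, zero_mul, sub_eq_zero] at this

theorem trace_nonneg_of_isIdempotentElem {V : Type*} [AddCommGroup V] [Module ℝ V]
    [FiniteDimensional ℝ V] {P : Module.End ℝ V} (hP : IsIdempotentElem P) :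
    0 ≤ LinearMap.trace ℝ V P := by
  rw [(LinearMap.IsIdempotentElem.isProj_range P hP).trace]
  positivity

theorem trace_pos_of_isIdempotentElem {V : Type*} [AddCommGroup V] [Module ℝ V]
    [FiniteDimensional ℝ V] {P : Module.End ℝ V} (hP : IsIdempotentElem P) (h0 : P ≠ 0) :
    0 < LinearMap.trace ℝ V P :=
  (trace_nonneg_of_isIdempotentElem hP).lt_of_ne fun h =>
    h0 (LinearMap.IsIdempotentElem.eq_zero_of_trace_eq_zero hP h.symm)

theorem quadratic_eq_sq_add_sq (z : ℂ) :
    X ^ 2 - C (2 * z.re) * X + C (‖z‖ ^ 2) = (X - C z.re) ^ 2 + C z.im ^ 2 := by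
  rw [Complex.sq_norm, Complex.normSq_apply]
  simp only [map_mul, map_add, map_ofNat]
  ring

theorem splits_of_forall_aeval_eq_zero_im_eq_zero {p : ℝ[X]} (hp0 : p ≠ 0)
    (h : ∀ z : ℂ, aeval z p = 0 → z.im = 0) : p.Splits := by
  refine Splits.of_splits_map (algebraMap ℝ ℂ) (IsAlgClosed.splits _) fun z hz => ?_
  rw [mem_roots (map_ne_zero hp0), IsRoot, eval_map_algebraMap] at hz
  exact ⟨z.re, Complex.ext rfl (h z hz).symm⟩

theorem eval_basis_id {s : Finset ℝ} {t u : ℝ} (ht : t ∈ s) (hu : u ∈ s) :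
    (Lagrange.basis s id t).eval u = if t = u then 1 else 0 := by
  split_ifs with htu
  · subst htu
    exact Lagrange.eval_basis_self (Set.injOn_id _) ht
  · exact Lagrange.eval_basis_of_ne (v := id) htu hu

theorem mul_self_mul_mul_eq {A : Type*} [CommMagma A] [IsCommJordan A] (x y : A) :
    x * x * y * x = x * x * (y * x) := by
  rw [mul_comm _ x, mul_comm (x * x) y, ← IsCommJordan.lmul_comm_rmul_rmul, mul_comm (x * y),
    mul_comm x y]

variable {A : Type*} [NonUnitalNonAssocCommRing A] [Module ℝ A]

theorem linearized_jordan_identity [IsCommJordan A] (x z w y : A) :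
    x * z * y * w + x * w * y * z + z * w * y * x =
      x * z * (y * w) + x * w * (y * z) + z * w * (y * x) := by
  have h1 := mul_self_mul_mul_eq (x + z + w) y
  have h2 := mul_self_mul_mul_eq (x + z) y
  have h3 := mul_self_mul_mul_eq (x + w) y
  have h4 := mul_self_mul_mul_eq (z + w) y
  have h5 := mul_self_mul_mul_eq x y
  have h6 := mul_self_mul_mul_eq z y
  have h7 := mul_self_mul_mul_eq w y
  simp only [mul_add, add_mul, mul_comm z x, mul_comm w x, mul_comm w z] at h1 h2 h3 h4 h5 h6 h7
  refine smul_right_injective A (two_ne_zero (α := ℝ)) ?_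
  simp only [two_smul]
  linear_combination (norm := abel1) h1 - h2 - h3 - h4 + h5 + h6 + h7

variable [SMulCommClass ℝ A A] [IsScalarTower ℝ A A]

local notation "L" => LinearMap.mul ℝ _

theorem lmul_mul_mul [IsCommJordan A] (u x y : A) :
    L (u * x * y) = L (u * x) * L y + L (y * x) * L u + L (y * u) * L x
      - L x * L y * L u - L u * L y * L x := by
  ext t
  have h := linearized_jordan_identity u x t y
  simp only [LinearMap.sub_apply, LinearMap.add_apply, Module.End.mul_apply,
    LinearMap.mul_apply']
  rw [mul_comm (y * x), mul_comm (y * u), mul_comm x (y * (u * t)), mul_comm y (u * t),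
    mul_comm u (y * (x * t)), mul_comm y (x * t)]
  linear_combination (norm := abel1) h

theorem commute_lmul_lmul_mul_self [IsCommJordan A] (a : A) : Commute (L a) (L (a * a)) := by
  ext t
  simp only [Module.End.mul_apply, LinearMap.mul_apply']
  rw [mul_comm (a * a) t, ← IsCommJordan.lmul_comm_rmul_rmul, mul_comm (a * t)]

section PolyEval

/-- `polyEval e a p` is `p(a)`, computed as `p(L a) e`; its multiplicativity `polyEval_mul` is
the power-associativity of Jordan algebras. -/
noncomputable def polyEval (e a : A) : ℝ[X] →ₗ[ℝ] A :=
  LinearMap.applyₗ e ∘ₗ (aeval (L a)).toLinearMap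

theorem polyEval_apply (e a : A) (p : ℝ[X]) : polyEval e a p = aeval (L a) p e := rfl

variable {e : A}

theorem polyEval_X (he : ∀ x : A, e * x = x) (a : A) : polyEval e a X = a := by
  simp [polyEval_apply, mul_comm a e, he]

theorem polyEval_C_mul (a : A) (c : ℝ) (p : ℝ[X]) :
    polyEval e a (C c * p) = c • polyEval e a p := by
  rw [C_mul', map_smul]

theorem exists_polyEval_eq_zero [FiniteDimensional ℝ A] (e a : A) :
    ∃ p : ℝ[X], p ≠ 0 ∧ polyEval e a p = 0 := by
  by_contra! h
  have hinj : Function.Injective (polyEval e a) :=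
    (injective_iff_map_eq_zero _).mpr fun p hp => by_contra fun hp0 => h p hp0 hp
  exact Polynomial.not_finite (Module.Finite.of_injective _ hinj)

variable [IsCommJordan A]

theorem lmul_pow_apply_mem_adjoin (he : ∀ x : A, e * x = x) (a : A) (n : ℕ) :
    L ((L a ^ n) e) ∈ Algebra.adjoin ℝ {L a, L (a * a)} := by
  have ha : L a ∈ Algebra.adjoin ℝ {L a, L (a * a)} := Algebra.subset_adjoin (by simp)
  have ha2 : L (a * a) ∈ Algebra.adjoin ℝ {L a, L (a * a)} := Algebra.subset_adjoin (by simp)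
  induction n using Nat.twoStepInduction with
  | zero =>
    have : L e = 1 := by ext t; simp [he]
    rw [pow_zero, Module.End.one_apply, this]
    exact Subalgebra.one_mem _
  | one => simp [mul_comm a e, he, ha]
  | more n h0 h1 =>
    set b := (L a ^ n) e
    have hb1 : (L a ^ (n + 1)) e = b * a := by
      rw [pow_succ', Module.End.mul_apply, mul_comm]; rfl
    have hb2 : (L a ^ (n + 2)) e = b * a * a := by
      rw [pow_succ', Module.End.mul_apply, hb1, LinearMap.mul_apply', mul_comm]
    rw [hb1] at h1
    rw [hb2, lmul_mul_mul, mul_comm a b]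
    exact sub_mem (sub_mem (add_mem (add_mem (mul_mem h1 ha) (mul_mem ha2 h0)) (mul_mem h1 ha))
      (mul_mem (mul_mem ha ha) h0)) (mul_mem (mul_mem h0 ha) ha)

theorem commute_lmul_lmul_polyEval (he : ∀ x : A, e * x = x) (a : A) (p : ℝ[X]) :
    Commute (L a) (L (polyEval e a p)) := by
  refine Algebra.commute_of_mem_adjoin_of_forall_mem_commute (R := ℝ) (s := {L a, L (a * a)})
    ?_ ?_
  · induction p using Polynomial.induction_on' with
    | add p q hp hq => rw [map_add, map_add]; exact add_mem hp hq
    | monomial n c =>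
      rw [polyEval_apply, aeval_monomial, Algebra.algebraMap_eq_smul_one, smul_mul_assoc, one_mul,
        LinearMap.smul_apply, map_smul]
      exact Subalgebra.smul_mem _ (lmul_pow_apply_mem_adjoin he a n) c
  · rintro b (rfl | rfl)
    exacts [Commute.refl _, commute_lmul_lmul_mul_self a]

theorem polyEval_mul (he : ∀ x : A, e * x = x) (a : A) (p q : ℝ[X]) :
    polyEval e a (p * q) = polyEval e a p * polyEval e a q := by
  have hcomm : Commute (L (polyEval e a q)) (aeval (L a) p) :=
    Algebra.commute_of_mem_adjoin_singleton_of_commute (aeval_mem_adjoin_singleton ℝ (L a))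
      (commute_lmul_lmul_polyEval he a q).symm
  calc polyEval e a (p * q) = aeval (L a) p (L (polyEval e a q) e) := by
        rw [LinearMap.mul_apply', mul_comm _ e, he, polyEval_apply, polyEval_apply, map_mul,
          Module.End.mul_apply]
    _ = polyEval e a q * polyEval e a p := by
        rw [← Module.End.mul_apply, ← hcomm.eq, Module.End.mul_apply]; rfl
    _ = polyEval e a p * polyEval e a q := mul_comm _ _

theorem polyEval_mul_eq_zero_of_mul_self_mul (he : ∀ x : A, e * x = x)
    (hFR : ∀ x y : A, x * x + y * y = 0 → x = 0 ∧ y = 0) {a : A} {q r : ℝ[X]}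
    (h : polyEval e a (q * q * r) = 0) : polyEval e a (q * r) = 0 := by
  have : polyEval e a (q * r) * polyEval e a (q * r) + 0 * 0 = 0 := by
    rw [← polyEval_mul he, mul_zero, add_zero, show q * r * (q * r) = q * q * r * r by ring,
      polyEval_mul he, h, zero_mul]
  exact (hFR _ _ this).1

theorem polyEval_eq_zero_of_sq_add_sq_mul (he : ∀ x : A, e * x = x)
    (hFR : ∀ x y : A, x * x + y * y = 0 → x = 0 ∧ y = 0) {a : A} {α β : ℝ} (hβ : β ≠ 0)
    {r : ℝ[X]} (h : polyEval e a (((X - C α) ^ 2 + C β ^ 2) * r) = 0) : polyEval e a r = 0 := by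
  have : polyEval e a ((X - C α) * r) * polyEval e a ((X - C α) * r)
      + polyEval e a (C β * r) * polyEval e a (C β * r) = 0 := by
    rw [← polyEval_mul he, ← polyEval_mul he, ← map_add,
      show (X - C α) * r * ((X - C α) * r) + C β * r * (C β * r)
        = ((X - C α) ^ 2 + C β ^ 2) * r * r by ring, polyEval_mul he, h, zero_mul]
  have hβr := (hFR _ _ this).2
  rw [polyEval_C_mul] at hβr
  exact (smul_eq_zero.mp hβr).resolve_left hβ

/-- A repeated root, or a pair of non-real roots, of an annihilating polynomial can be split off
by formal reality, which lowers the degree. -/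
theorem exists_polyEval_eq_zero_splits_nodup (he : ∀ x : A, e * x = x)
    (hFR : ∀ x y : A, x * x + y * y = 0 → x = 0 ∧ y = 0) {a : A} {p : ℝ[X]} (hp0 : p ≠ 0)
    (hp : polyEval e a p = 0) :
    ∃ m : ℝ[X], m ≠ 0 ∧ polyEval e a m = 0 ∧ m.Splits ∧ m.roots.Nodup := by
  induction hn : p.natDegree using Nat.strong_induction_on generalizing p with
  | _ n ih =>
  subst hn
  by_cases hdup : ∃ t, 2 ≤ p.roots.count t
  · obtain ⟨t, ht⟩ := hdup
    obtain ⟨r, rfl⟩ := (le_rootMultiplicity_iff hp0).mp (count_roots p ▸ ht)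
    have hr0 : r ≠ 0 := right_ne_zero_of_mul hp0
    refine ih _ ?_ (mul_ne_zero (X_sub_C_ne_zero t) hr0)
      (polyEval_mul_eq_zero_of_mul_self_mul he hFR (by rwa [← sq])) rfl
    rw [natDegree_mul (X_sub_C_ne_zero t) hr0,
      natDegree_mul (pow_ne_zero _ (X_sub_C_ne_zero t)) hr0, natDegree_pow, natDegree_X_sub_C]
    omega
  by_cases hcplx : ∃ z : ℂ, aeval z p = 0 ∧ z.im ≠ 0
  · obtain ⟨z, hz, him⟩ := hcplx
    obtain ⟨r, rfl⟩ := p.quadratic_dvd_of_aeval_eq_zero_im_ne_zero hz him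
    have hq0 := left_ne_zero_of_mul hp0
    have hr0 : r ≠ 0 := right_ne_zero_of_mul hp0
    rw [quadratic_eq_sq_add_sq] at hp hq0 ih
    refine ih _ ?_ hr0 (polyEval_eq_zero_of_sq_add_sq_mul he hFR him hp) rfl
    rw [natDegree_mul hq0 hr0, ← map_pow, natDegree_add_C, natDegree_pow, natDegree_X_sub_C]
    omega
  push Not at hdup hcplx
  exact ⟨p, hp0, hp, splits_of_forall_aeval_eq_zero_im_eq_zero hp0 hcplx,
    Multiset.nodup_iff_count_le_one.mpr fun t => Nat.le_of_lt_succ (hdup t)⟩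

theorem exists_finset_polyEval_eq_zero [FiniteDimensional ℝ A] (he : ∀ x : A, e * x = x)
    (hFR : ∀ x y : A, x * x + y * y = 0 → x = 0 ∧ y = 0) (a : A) :
    ∃ s : Finset ℝ, ∀ p : ℝ[X], (∀ t ∈ s, p.eval t = 0) → polyEval e a p = 0 := by
  obtain ⟨p, hp0, hp⟩ := exists_polyEval_eq_zero e a
  obtain ⟨m, hm0, hm, hsplit, hnodup⟩ := exists_polyEval_eq_zero_splits_nodup he hFR hp0 hp
  refine ⟨m.roots.toFinset, fun q hq => ?_⟩
  rcases eq_or_ne q 0 with rfl | hq0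
  · exact map_zero _
  obtain ⟨k, rfl⟩ : m ∣ q := hsplit.dvd_of_roots_le_roots hm0 <|
    (Multiset.le_iff_subset hnodup).mpr fun t ht =>
      (mem_roots hq0).mpr (hq t (Multiset.mem_toFinset.mpr ht))
  rw [polyEval_mul he, hm, zero_mul]

theorem exists_spectral_decomposition [FiniteDimensional ℝ A] (he : ∀ x : A, e * x = x)
    (hFR : ∀ x y : A, x * x + y * y = 0 → x = 0 ∧ y = 0) (a : A) :
    ∃ (s : Finset ℝ) (f : ℝ → A), IsOrthogonalIdempotentsOn s f ∧ a = ∑ t ∈ s, t • f t := by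
  obtain ⟨s, hs⟩ := exists_finset_polyEval_eq_zero he hFR a
  have hagree : ∀ p q : ℝ[X], (∀ t ∈ s, p.eval t = q.eval t) → polyEval e a p = polyEval e a q :=
    fun p q h => sub_eq_zero.mp <| by
      rw [← map_sub]; exact hs _ fun t ht => by rw [eval_sub, h t ht, sub_self]
  refine ⟨s, fun t => polyEval e a (Lagrange.basis s id t), ⟨fun t ht => ?_,
    fun t ht u hu htu => ?_⟩, ?_⟩
  · rw [IsIdempotentElem, ← polyEval_mul he]
    refine hagree _ _ fun u hu => ?_
    rw [eval_mul, eval_basis_id ht hu]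
    split_ifs <;> norm_num
  · rw [← polyEval_mul he, ← map_zero (polyEval e a)]
    refine hagree _ _ fun v hv => ?_
    rw [eval_mul, eval_basis_id ht hv, eval_basis_id hu hv, eval_zero]
    split_ifs with htv huv
    · exact absurd (htv.trans huv.symm) htu
    all_goals simp
  · calc a = polyEval e a X := (polyEval_X he a).symm
      _ = polyEval e a (∑ t ∈ s, C t * Lagrange.basis s id t) := hagree _ _ fun u hu => by
          simp only [eval_X, eval_finsetSum, eval_mul, eval_C]
          rw [Finset.sum_congr rfl fun t ht => by rw [eval_basis_id ht hu]]
          simp [hu]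
      _ = ∑ t ∈ s, t • polyEval e a (Lagrange.basis s id t) := by
          simp only [map_sum, polyEval_C_mul]

end PolyEval

section Trace

noncomputable def leftTrace : A →ₗ[ℝ] ℝ := LinearMap.trace ℝ A ∘ₗ LinearMap.mul ℝ A

theorem leftTrace_apply (a : A) : leftTrace a = LinearMap.trace ℝ A (L a) := rfl

/-- For an idempotent `f`, `L f` is annihilated by `X (X - 1) (2X - 1)`
(`aeval_lmul_peirce_eq_zero`), so `peirceOne f` and `peirceHalf f` are the projections onto the
Peirce spaces of `f` for the eigenvalues `1` and `1/2` of `L f`. -/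
noncomputable def peirceOne (f : A) : Module.End ℝ A := aeval (L f) (X * (2 * X - 1) : ℝ[X])

noncomputable def peirceHalf (f : A) : Module.End ℝ A := aeval (L f) (4 * X * (1 - X) : ℝ[X])

theorem lmul_eq_peirceOne_add_peirceHalf (f : A) :
    L f = peirceOne f + (2⁻¹ : ℝ) • peirceHalf f := by
  have h := congrArg (aeval (L f))
    (show (X : ℝ[X]) = X * (2 * X - 1) + (2⁻¹ : ℝ) • (4 * X * (1 - X))
      from Polynomial.funext fun x => by simp; ring)
  rwa [aeval_X, map_add, map_smul] at h

theorem peirceOne_apply_self {f : A} (hf : IsIdempotentElem f) : peirceOne f f = f := by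
  simp [peirceOne, hf.eq, two_mul]

variable {e : A} [IsCommJordan A]

theorem leftTrace_mul_mul_comm (u x y : A) : leftTrace (u * x * y) = leftTrace (y * x * u) := by
  simp only [leftTrace_apply, lmul_mul_mul u x y, lmul_mul_mul y x u, map_add, map_sub,
    mul_comm y u]
  rw [LinearMap.trace_mul_cycle ℝ (L u) (L y) (L x), LinearMap.trace_mul_cycle ℝ (L y) (L u) (L x)]
  ring

theorem leftTrace_mul_assoc (a b c : A) : leftTrace (a * b * c) = leftTrace (a * (b * c)) := by
  rw [leftTrace_mul_mul_comm, mul_comm a (b * c), mul_comm b c]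

theorem leftTrace_mul_aeval (f : A) (q : ℝ[X]) (u v : A) :
    leftTrace (u * aeval (L f) q v) = leftTrace (aeval (L f) q u * v) := by
  have hpow : ∀ n : ℕ, ∀ u v : A, leftTrace (u * (L f ^ n) v) = leftTrace ((L f ^ n) u * v) := by
    intro n
    induction n with
    | zero => simp
    | succ n ih =>
      intro u v
      rw [pow_succ, Module.End.mul_apply, ih, ← pow_succ, pow_succ', Module.End.mul_apply,
        LinearMap.mul_apply', LinearMap.mul_apply', ← leftTrace_mul_assoc,
        mul_comm ((L f ^ n) u) f]
  induction q using Polynomial.induction_on' with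
  | add p q hp hq => simp only [map_add, LinearMap.add_apply, mul_add, add_mul, hp, hq]
  | monomial n c =>
    simp only [aeval_monomial, Algebra.algebraMap_eq_smul_one, smul_mul_assoc, one_mul,
      LinearMap.smul_apply, mul_smul_comm, map_smul, hpow]

theorem aeval_lmul_peirce_eq_zero {f : A} (hf : IsIdempotentElem f) :
    aeval (L f) (X * (X - 1) * (2 * X - 1) : ℝ[X]) = 0 := by
  have h := lmul_mul_mul f f f
  simp only [hf.eq] at h
  simp only [map_mul, map_sub, aeval_X, map_one, map_ofNat]
  rw [show L f * (L f - 1) * (2 * L f - 1) = L f - (L f * L f + L f * L f + L f * L f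
    - L f * L f * L f - L f * L f * L f) by noncomm_ring, ← h, sub_self]

theorem isIdempotentElem_peirceOne {f : A} (hf : IsIdempotentElem f) :
    IsIdempotentElem (peirceOne f) :=
  isIdempotentElem_aeval_of_dvd (aeval_lmul_peirce_eq_zero hf) ⟨2 * X + 1, by ring⟩

theorem isIdempotentElem_peirceHalf {f : A} (hf : IsIdempotentElem f) :
    IsIdempotentElem (peirceHalf f) :=
  isIdempotentElem_aeval_of_dvd (aeval_lmul_peirce_eq_zero hf) ⟨8 * X - 4, by ring⟩

theorem leftTrace_pos_of_isIdempotentElem [FiniteDimensional ℝ A] {f : A}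
    (hf : IsIdempotentElem f) (h0 : f ≠ 0) : 0 < leftTrace f := by
  have hone : peirceOne f ≠ 0 := fun h =>
    h0 (by rw [← peirceOne_apply_self hf, h, LinearMap.zero_apply])
  rw [leftTrace_apply, lmul_eq_peirceOne_add_peirceHalf, map_add, map_smul, smul_eq_mul]
  have := trace_pos_of_isIdempotentElem (isIdempotentElem_peirceOne hf) hone
  have := trace_nonneg_of_isIdempotentElem (isIdempotentElem_peirceHalf hf)
  positivity

theorem leftTrace_nonneg_of_isIdempotentElem [FiniteDimensional ℝ A] {f : A}
    (hf : IsIdempotentElem f) : 0 ≤ leftTrace f := by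
  rcases eq_or_ne f 0 with rfl | h0
  · rw [map_zero]
  · exact (leftTrace_pos_of_isIdempotentElem hf h0).le

theorem leftTrace_mul_self_nonneg [FiniteDimensional ℝ A] (he : ∀ x : A, e * x = x)
    (hFR : ∀ x y : A, x * x + y * y = 0 → x = 0 ∧ y = 0) (y : A) : 0 ≤ leftTrace (y * y) := by
  obtain ⟨s, f, hf, rfl⟩ := exists_spectral_decomposition he hFR y
  rw [hf.sum_smul_mul_sum_smul, map_sum]
  refine Finset.sum_nonneg fun t ht => ?_
  rw [map_smul, smul_eq_mul]
  exact mul_nonneg (mul_self_nonneg t)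
    (leftTrace_nonneg_of_isIdempotentElem (hf.isIdempotentElem t ht))

theorem leftTrace_mul_aeval_apply_nonneg [FiniteDimensional ℝ A] (he : ∀ x : A, e * x = x)
    (hFR : ∀ x y : A, x * x + y * y = 0 → x = 0 ∧ y = 0) {f : A} {q : ℝ[X]}
    (hq : IsIdempotentElem (aeval (L f) q)) (x : A) : 0 ≤ leftTrace (x * aeval (L f) q x) := by
  calc 0 ≤ leftTrace (aeval (L f) q x * aeval (L f) q x) := leftTrace_mul_self_nonneg he hFR _
    _ = leftTrace (x * aeval (L f) q (aeval (L f) q x)) := (leftTrace_mul_aeval f q x _).symm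
    _ = leftTrace (x * aeval (L f) q x) := by rw [← Module.End.mul_apply, hq.eq]

theorem leftTrace_mul_mul_self_nonneg [FiniteDimensional ℝ A] (he : ∀ x : A, e * x = x)
    (hFR : ∀ x y : A, x * x + y * y = 0 → x = 0 ∧ y = 0) {f : A} (hf : IsIdempotentElem f)
    (x : A) : 0 ≤ leftTrace (f * (x * x)) := by
  have h1 := leftTrace_mul_aeval_apply_nonneg he hFR (isIdempotentElem_peirceOne hf) x
  have h2 := leftTrace_mul_aeval_apply_nonneg he hFR (isIdempotentElem_peirceHalf hf) x
  rw [mul_comm f, leftTrace_mul_assoc, mul_comm x f]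
  change 0 ≤ leftTrace (x * L f x)
  rw [lmul_eq_peirceOne_add_peirceHalf, LinearMap.add_apply, LinearMap.smul_apply, mul_add,
    mul_smul_comm, map_add, map_smul, smul_eq_mul]
  exact add_nonneg h1 (mul_nonneg (by norm_num) h2)

theorem isSquare_add [FiniteDimensional ℝ A] (he : ∀ x : A, e * x = x)
    (hFR : ∀ x y : A, x * x + y * y = 0 → x = 0 ∧ y = 0) {x y : A} (hx : IsSquare x)
    (hy : IsSquare y) : IsSquare (x + y) := by
  obtain ⟨p, rfl⟩ := hx
  obtain ⟨q, rfl⟩ := hy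
  obtain ⟨s, f, hf, hdecomp⟩ := exists_spectral_decomposition he hFR (p * p + q * q)
  have hnonneg : ∀ t ∈ s, f t ≠ 0 → 0 ≤ t := fun t ht h0 => by
    have key : t * leftTrace (f t) = leftTrace (f t * (p * p)) + leftTrace (f t * (q * q)) := by
      rw [← map_add, ← mul_add, hdecomp, hf.mul_sum_smul ht (fun t => t), map_smul, smul_eq_mul]
    have := leftTrace_pos_of_isIdempotentElem (hf.isIdempotentElem t ht) h0
    have := leftTrace_mul_mul_self_nonneg he hFR (hf.isIdempotentElem t ht) p
    have := leftTrace_mul_mul_self_nonneg he hFR (hf.isIdempotentElem t ht) q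
    nlinarith
  refine ⟨∑ t ∈ s, √t • f t, ?_⟩
  rw [hf.sum_smul_mul_sum_smul, hdecomp]
  refine Finset.sum_congr rfl fun t ht => ?_
  rcases eq_or_ne (f t) 0 with h0 | h0
  · rw [h0, smul_zero, smul_zero]
  · rw [Real.mul_self_sqrt (hnonneg t ht h0)]

end Trace

end JordanAlgebra

open JordanAlgebra in
/-- Let `A` be a finite-dimensional formally real Jordan algebra
(commutative, satisfying the Jordan identity `((x²)y)x = (x²)(yx)`, with
`x² + y² = 0 ⟹ x = y = 0`) with unit `e`.  Then the set `Y = {a² : a ∈ A}` of squares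
is a convex cone (closed under addition and nonnegative scalar multiples) satisfying
`Y ∩ (−Y) = {0}` and `A = Y − Y`. -/
theorem stmt_19 {A : Type*} [NonUnitalNonAssocCommRing A] [Module ℝ A]
    [SMulCommClass ℝ A A] [IsScalarTower ℝ A A] [FiniteDimensional ℝ A]
    (hJordan : ∀ x y : A, x * x * y * x = x * x * (y * x))
    (hFR : ∀ x y : A, x * x + y * y = 0 → x = 0 ∧ y = 0)
    (e : A) (he : ∀ x : A, e * x = x) :
    ∀ Y : Set A, Y = {a | ∃ x : A, a = x * x} →
      (∀ y ∈ Y, ∀ z ∈ Y, y + z ∈ Y) ∧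
      (∀ r : ℝ, 0 ≤ r → ∀ y ∈ Y, r • y ∈ Y) ∧
      Y ∩ (-Y) = {0} ∧
      (∀ a : A, ∃ y ∈ Y, ∃ z ∈ Y, a = y - z) := by
  have : IsCommJordan A := ⟨fun a b => by
    rw [mul_comm (a * b), mul_comm a b, ← hJordan, mul_comm (a * a * b) a, mul_comm (a * a) b]⟩
  rintro Y rfl
  refine ⟨fun y hy z hz => isSquare_add he hFR hy hz, fun r hr y ⟨x, hx⟩ => ⟨√r • x, ?_⟩, ?_,
    fun a => ⟨_, ⟨(2⁻¹ : ℝ) • (a + e), rfl⟩, _, ⟨(2⁻¹ : ℝ) • (a - e), rfl⟩, ?_⟩⟩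
  · rw [hx, smul_mul_smul_comm, Real.mul_self_sqrt hr]
  · ext w
    constructor
    · rintro ⟨⟨x, rfl⟩, z, hz⟩
      rw [(hFR x z (by rw [← hz, add_neg_cancel])).1, mul_zero, Set.mem_singleton_iff]
    · rintro rfl
      exact ⟨⟨0, (mul_zero 0).symm⟩, 0, by rw [neg_zero, mul_zero]⟩
  · simp only [smul_mul_smul_comm, mul_add, add_mul, mul_sub, sub_mul, he, mul_comm _ e]
    module
end
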